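/- arXiv:2405.05927 — 2 statements merged into one kernel-verified Lean document; each statement's English description precedes it below -/
import Mathlib

section
/- For every α, β ∈ (0,1] there exists a constant c > 0 such that for all ε > 0: ∫ from (α/2)·min{1, ε(|log ε|+1)} to α of β·min{ε/x, 1} dx ≥ c·min{ε(|log ε|+1), 1}. -/
/-!
On `(0, 1]` the integrand `min (ε / x) 1` is at least `min ε 1`, which settles the case where `ε`
is bounded below in terms of `α`. For small `ε` the lower endpoint is at most `ε L`, where
`L = |log ε| + 1`, and `min (ε / x) 1 = ε / x` on `(ε L, α)`; the integral is then at least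
`ε log (α / (ε L)) = ε (L - 1 + log α - log L)`, which is at least `ε L / 4` once `ε ≤ α⁴ e⁻³`.
-/

open MeasureTheory Real Set

lemma Real.log_le_half_self {x : ℝ} (hx : 0 < x) : log x ≤ x / 2 := by
  have h₁ : log (x / exp 1) ≤ x / exp 1 - 1 := log_le_sub_one_of_pos (by positivity)
  rw [log_div hx.ne' (exp_pos 1).ne', log_exp] at h₁
  have h₂ : x / exp 1 ≤ x / 2 :=
    div_le_div_of_nonneg_left hx.le two_pos (by linarith [add_one_le_exp 1])
  linarith

section MinDivOne

variable {ε a b : ℝ}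

lemma integrableOn_min_div_one (ha : 0 < a) :
    IntegrableOn (fun x => min (ε / x) 1) (Ioo a b) := by
  have hcont : ContinuousOn (fun x : ℝ => min (ε / x) 1) (Icc a b) :=
    ContinuousOn.inf (continuousOn_const.div continuousOn_id fun _ hx => (ha.trans_le hx.1).ne')
      continuousOn_const
  exact hcont.integrableOn_Icc.mono_set Ioo_subset_Icc_self

lemma setIntegral_min_div_one_nonneg (hε : 0 < ε) (ha : 0 < a) :
    0 ≤ ∫ x in Ioo a b, min (ε / x) 1 :=
  setIntegral_nonneg measurableSet_Ioo fun _ hx =>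
    le_min (div_pos hε (ha.trans hx.1)).le zero_le_one

lemma mul_sub_le_setIntegral_min_div_one (hε : 0 < ε) (ha : 0 < a) (hab : a ≤ b)
    (hb : b ≤ 1) : min ε 1 * (b - a) ≤ ∫ x in Ioo a b, min (ε / x) 1 := by
  have hbound : ∀ x ∈ Ioo a b, min ε 1 ≤ min (ε / x) 1 := fun x hx =>
    min_le_min_right 1 (le_div_self hε.le (ha.trans hx.1) (hx.2.le.trans hb))
  have h := setIntegral_ge_of_const_le measurableSet_Ioo
    (by rw [Real.volume_Ioo]; exact ENNReal.ofReal_ne_top) hbound (integrableOn_min_div_one ha)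
  rwa [Real.volume_real_Ioo_of_le hab, smul_eq_mul, mul_comm] at h

lemma mul_log_le_setIntegral_min_div_one {M : ℝ} (hε : 0 < ε) (ha : 0 < a) (hab : a ≤ b)
    (haM : a ≤ M) (hεM : ε ≤ M) : ε * log (b / M) ≤ ∫ x in Ioo a b, min (ε / x) 1 := by
  have hM : 0 < M := ha.trans_le haM
  rcases le_or_gt b M with hbM | hMb
  · have hlog : log (b / M) ≤ 0 :=
      log_nonpos (div_nonneg (ha.le.trans hab) hM.le) ((div_le_one hM).2 hbM)
    exact (mul_nonpos_of_nonneg_of_nonpos hε.le hlog).trans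
      (setIntegral_min_div_one_nonneg hε ha)
  · have heq : ∫ x in Ioo M b, min (ε / x) 1 = ε * log (b / M) := by
      rw [setIntegral_congr_fun measurableSet_Ioo fun x hx =>
          min_eq_left ((div_le_one (hM.trans hx.1)).2 (hεM.trans hx.1.le)),
        ← integral_Ioc_eq_integral_Ioo, ← intervalIntegral.integral_of_le hMb.le]
      simp only [div_eq_mul_inv]
      rw [intervalIntegral.integral_const_mul, integral_inv_of_pos hM (hM.trans hMb),
        div_eq_mul_inv]
    rw [← heq]
    refine setIntegral_mono_set (integrableOn_min_div_one ha) ?_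
      (Ioo_subset_Ioo_left haM).eventuallyLE
    filter_upwards [ae_restrict_mem measurableSet_Ioo] with x hx
    exact le_min (div_pos hε (ha.trans hx.1)).le zero_le_one

end MinDivOne

lemma abs_log_add_one_div_four_le_log_div {α ε : ℝ} (hα₀ : 0 < α) (hα₁ : α ≤ 1) (hε : 0 < ε)
    (hεα : log ε ≤ 4 * log α - 3) :
    (|log ε| + 1) / 4 ≤ log (α / (ε * (|log ε| + 1))) := by
  have hL : 0 < |log ε| + 1 := by positivity
  rw [abs_of_neg (by linarith [log_nonpos hα₀.le hα₁])] at hL ⊢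
  rw [log_div hα₀.ne' (mul_pos hε hL).ne', log_mul hε.ne' hL.ne']
  linarith [log_le_half_self hL]

/-- **Elementary integral estimate.** For `α, β ∈ (0,1]` the integral of
`β·min{ε/x, 1}` over `((α/2)·min{1, ε(|log ε|+1)}, α)` is bounded below by
`c·min{ε(|log ε|+1), 1}`. -/
theorem stmt_11 (α β : ℝ) (hα : α ∈ Set.Ioc (0 : ℝ) 1) (hβ : β ∈ Set.Ioc (0 : ℝ) 1) :
    ∃ c > 0, ∀ ε > 0,
      c * min (ε * (|Real.log ε| + 1)) 1 ≤
        ∫ x in Set.Ioo (α / 2 * min 1 (ε * (|Real.log ε| + 1))) α,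
          β * min (ε / x) 1 := by
  obtain ⟨hα₀, hα₁⟩ := hα
  obtain ⟨hβ₀, -⟩ := hβ
  set δ := exp (4 * log α - 3)
  have hδ₁ : δ ≤ 1 := exp_le_one_iff.2 (by linarith [log_nonpos hα₀.le hα₁])
  refine ⟨β * δ * α / 4, by positivity, fun ε hε => ?_⟩
  set L := |log ε| + 1
  have hL₁ : 1 ≤ L := le_add_of_nonneg_left (abs_nonneg _)
  rw [min_comm 1 (ε * L), integral_const_mul]
  set m := min (ε * L) 1
  have hεL : 0 < ε * L := by positivity
  have hm₀ : 0 < m := lt_min hεL one_pos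
  have hm₁ : m ≤ 1 := min_le_right _ _
  have ha₀ : 0 < α / 2 * m := by positivity
  have haα : α / 2 * m ≤ α / 2 := mul_le_of_le_one_right (by positivity) hm₁
  rcases le_or_gt (log ε) (4 * log α - 3) with hsmall | hlarge
  · have hδα : δ * α ≤ 1 := mul_le_one₀ hδ₁ hα₀.le hα₁
    calc β * δ * α / 4 * m ≤ β * δ * α / 4 * (ε * L) := by gcongr; exact min_le_left _ _
      _ ≤ β * (ε * (L / 4)) := by
        nlinarith [mul_le_mul_of_nonneg_left hδα (mul_pos hβ₀ hεL).le]
      _ ≤ β * (ε * log (α / (ε * L))) := by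
        gcongr; exact abs_log_add_one_div_four_le_log_div hα₀ hα₁ hε hsmall
      _ ≤ β * ∫ x in Ioo (α / 2 * m) α, min (ε / x) 1 := by
        gcongr
        exact mul_log_le_setIntegral_min_div_one hε ha₀ (by linarith)
          ((mul_le_of_le_one_left hm₀.le (by linarith)).trans (min_le_left _ _))
          (le_mul_of_one_le_right hε.le hL₁)
  · have hδε : δ ≤ ε := (exp_lt_exp.2 hlarge).le.trans_eq (exp_log hε)
    calc β * δ * α / 4 * m ≤ β * (δ * (α / 2)) := by
          nlinarith [mul_pos (mul_pos hβ₀ (exp_pos (4 * log α - 3))) hα₀]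
      _ ≤ β * (min ε 1 * (α - α / 2 * m)) := by
        gcongr
        · exact le_min hδε hδ₁
        · linarith
      _ ≤ β * ∫ x in Ioo (α / 2 * m) α, min (ε / x) 1 := by
        gcongr
        exact mul_sub_le_setIntegral_min_div_one hε ha₀ (by linarith) hα₁
end

section
/- Let h : ℝ → ℝ be C² with locally Lipschitz second derivative and h(0) = h'(0) = 0, and let D := {(x,y) ∈ ℝ² : x > h(y)} (locally near the origin). Define ν(y) := (−1, h'(y))/√(1+h'(y)²), τ(y) := (−h'(y), −1)/√(1+h'(y)²), κ(y) := h''(y)/(1+h'(y)²), and Φ(x,y) := (h(y), y) − x·ν(y). Then: (i) the Jacobian matrix of Φ is ∇Φ(x,y) = [[−ν₁(y), τ₁(y)(xκ(y) − √(1+h'(y)²))], [−ν₂(y), τ₂(y)(xκ(y) − √(1+h'(y)²))]]; (ii) ∇Φ(0,0) = Id; (iii) there exist neighbourhoods U, V of the origin such that Φ : U → V is a C¹ diffeomorphism with Φ(U ∩ {x > 0}) = D ∩ V and Φ(U ∩ {x = 0}) = ∂D ∩ V; (iv) there exists a constant C > 0 (depending on h) such that for all sufficiently small r > 0, sup_{(x,y)∈Q_r}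 |∇Φ(x,y) − Id| ≤ C·r, where Q_r := (−r,r)×(−r,r). -/
open MeasureTheory

noncomputable section

/-- The Euclidean norm on `ℝ²` (realized as `Fin 2 → ℝ`). -/
def evnorm (v : Fin 2 → ℝ) : ℝ := Real.sqrt (v 0 ^ 2 + v 1 ^ 2)

/-- The gradient (Jacobian matrix) `∇u(x)` of `u : ℝ² → ℝ²`. -/
def grad (u : (Fin 2 → ℝ) → (Fin 2 → ℝ)) (x : Fin 2 → ℝ) :
    Matrix (Fin 2) (Fin 2) ℝ :=
  fun i j => fderiv ℝ u x (Pi.single j 1) i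

/-- The squared Frobenius norm of a `2 × 2` matrix. -/
def frobSq (A : Matrix (Fin 2) (Fin 2) ℝ) : ℝ := ∑ i, ∑ j, (A i j) ^ 2

/-- The squared (Frobenius) distance of a matrix to a set of matrices. -/
def distSq (A : Matrix (Fin 2) (Fin 2) ℝ)
    (K : Set (Matrix (Fin 2) (Fin 2) ℝ)) : ℝ :=
  sInf ((fun B => frobSq (A - B)) '' K)

/-- The pointwise (Frobenius) norm `|D²u|(x)` of the second derivative. -/
def hessNorm (u : (Fin 2 → ℝ) → (Fin 2 → ℝ)) (x : Fin 2 → ℝ) : ℝ :=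
  Real.sqrt (∑ i, ∑ j, ∑ k,
    (fderiv ℝ (fun y => grad u y i j) x (Pi.single k 1)) ^ 2)

/-- The symmetrized gradient `e(u) = (∇u + ∇uᵀ)/2`. -/
def symGrad (u : (Fin 2 → ℝ) → (Fin 2 → ℝ)) (x : Fin 2 → ℝ) :
    Matrix (Fin 2) (Fin 2) ℝ :=
  fun i j => (grad u x i j + grad u x j i) / 2

/-- The geometrically nonlinear singular perturbation energy `E_ε(u, Ω)`. -/
def Eenergy (K : Set (Matrix (Fin 2) (Fin 2) ℝ)) (ε : ℝ)
    (u : (Fin 2 → ℝ) → (Fin 2 → ℝ)) (Ω : Set (Fin 2 → ℝ)) : ℝ :=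
  (∫ x in Ω, distSq (grad u x) K) + ε * ∫ x in Ω, hessNorm u x

/-- The geometrically linearized singular perturbation energy `F_ε(v, Ω)`. -/
def Fenergy (K : Set (Matrix (Fin 2) (Fin 2) ℝ)) (ε : ℝ)
    (u : (Fin 2 → ℝ) → (Fin 2 → ℝ)) (Ω : Set (Fin 2 → ℝ)) : ℝ :=
  (∫ x in Ω, distSq (symGrad u x) K) + ε * ∫ x in Ω, hessNorm u x

/-- Regularity class: `u` is differentiable with differentiable gradient
(so `∇u ∈ W^{1,1}` and `|D²u|` is pointwise defined). -/
def Reg (u : (Fin 2 → ℝ) → (Fin 2 → ℝ)) : Prop :=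
  Differentiable ℝ u ∧ ∀ i j, Differentiable ℝ (fun x => grad u x i j)

/-!
Writing `γ(y) = (h(y), y)`, the map is `Φ(x, y) = γ(y) - x ν(y)`, so its Jacobian has columns
`-ν(y)` and `γ'(y) - x ν'(y)`; the Frenet-type identities `γ' = -s τ` and `ν' = -κ τ` give the
stated formula, and `h'(0) = 0` makes it the identity at the origin. The inverse function
theorem then yields a local `C¹` inverse. Along each line `x ↦ Φ(x, y)` the offset
`Φ₀ - h(Φ₁)` from the graph vanishes at `x = 0` and has `x`-derivative
`-ν₀(y) + h'(Φ₁) ν₁(y)`, which equals `1` at the origin; on a small square it is therefore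
strictly increasing, so `Φ(x, y)` lies in `D` exactly when `x > 0` and on `∂D` exactly when
`x = 0`. Finally each entry of `∇Φ(x, y) - Id` has the form `a(y) + x b(y)` with `a`
differentiable, `a(0) = 0` and `b` continuous, hence is `O(|x| + |y|)`.
-/

open Set Filter Topology Asymptotics ContinuousLinearMap

theorem ContDiff.exists_mem_nhds_diffeoOn {𝕜 E F : Type*} [RCLike 𝕜] [NormedAddCommGroup E]
    [NormedSpace 𝕜 E] [CompleteSpace E] [NormedAddCommGroup F] [NormedSpace 𝕜 F] {f : E → F}
    {f' : E ≃L[𝕜] F} {a : E} {n : WithTop ℕ∞} (hf : ContDiff 𝕜 n f) (hn : 1 ≤ n)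
    (hf' : HasFDerivAt f (f' : E →L[𝕜] F) a) :
    ∃ t ∈ 𝓝 a, ∀ U ⊆ t, IsOpen U → IsOpen (f '' U) ∧ InjOn f U ∧
      ∃ g : F → E, ContDiffOn 𝕜 n g (f '' U) ∧ ∀ p ∈ U, g (f p) = p := by
  have hn0 : n ≠ 0 := (zero_lt_one.trans_le hn).ne'
  set e := hf.contDiffAt.toOpenPartialHomeomorph f hf' hn0
  have hsrc : e.source ∈ 𝓝 a :=
    e.open_source.mem_nhds (hf.contDiffAt.mem_toOpenPartialHomeomorph_source hf' hn0)
  have hinv : fderiv 𝕜 f ⁻¹' range ((↑) : (E ≃L[𝕜] F) → E →L[𝕜] F) ∈ 𝓝 a :=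
    (hf.continuous_fderiv hn0).continuousAt.preimage_mem_nhds
      (ContinuousLinearEquiv.isOpen.mem_nhds ⟨f', hf'.fderiv.symm⟩)
  refine ⟨_, inter_mem hsrc hinv, fun U hU hUo => ⟨e.isOpen_image_of_subset_source hUo
    (hU.trans inter_subset_left), e.injOn.mono (hU.trans inter_subset_left), e.symm, ?_,
    fun p hp => e.left_inv (hU hp).1⟩⟩
  rintro _ ⟨u, hu, rfl⟩
  obtain ⟨hus, L, hL⟩ := hU hu
  refine (e.contDiffAt_symm (f₀' := L) (e.map_source hus) ?_ ?_).contDiffWithinAt <;>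
    rw [e.left_inv hus]
  · rw [hL]
    exact (hf.differentiable hn0 u).hasFDerivAt
  · exact hf.contDiffAt

theorem image_inter_setOf_eq_inter_image {α β : Type*} {f : α → β} {U : Set α} {P : α → Prop}
    {T : Set β} (hfP : ∀ u ∈ U, f u ∈ T ↔ P u) : f '' (U ∩ {u | P u}) = T ∩ f '' U := by
  ext q
  constructor
  · rintro ⟨u, ⟨hu, hP⟩, rfl⟩
    exact ⟨(hfP u hu).2 hP, u, hu, rfl⟩
  · rintro ⟨hT, u, hu, rfl⟩
    exact ⟨u, ⟨hu, (hfP u hu).1 hT⟩, rfl⟩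

theorem vec2_mem_ball_zero {x y δ : ℝ} (hδ : 0 < δ) :
    ![x, y] ∈ Metric.ball (0 : Fin 2 → ℝ) δ ↔ |x| < δ ∧ |y| < δ := by
  simp [pi_norm_lt_iff hδ, Fin.forall_fin_two]

theorem frontier_setOf_lt_apply {h : ℝ → ℝ} (hh : Continuous h) :
    frontier {p : Fin 2 → ℝ | h (p 1) < p 0} = {p | h (p 1) = p 0} := by
  refine (frontier_lt_subset_eq (hh.comp (continuous_apply 1)) (continuous_apply 0)).antisymm ?_
  intro p hp
  have hline : Continuous fun t : ℝ => p + t • Pi.single 0 1 := by fun_prop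
  rw [frontier_eq_closure_inter_closure]
  constructor
  · have := map_mem_closure hline (by simp : (0 : ℝ) ∈ closure (Ioi 0))
      (t := {p : Fin 2 → ℝ | h (p 1) < p 0}) fun t (ht : 0 < t) => by simp [← hp.out, ht]
    rwa [zero_smul, add_zero] at this
  · have := map_mem_closure hline (by simp : (0 : ℝ) ∈ closure (Iio 0))
      (t := {p : Fin 2 → ℝ | h (p 1) < p 0}ᶜ) fun t (ht : t < 0) => by simp [← hp.out, ht.le]
    rwa [zero_smul, add_zero] at this

theorem pos_iff_and_eq_zero_iff_of_deriv_pos {g g' : ℝ → ℝ} {δ t : ℝ}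
    (hg : ∀ s ∈ Ioo (-δ) δ, HasDerivAt g (g' s) s) (hg' : ∀ s ∈ Ioo (-δ) δ, 0 < g' s)
    (hg0 : g 0 = 0) (ht : t ∈ Ioo (-δ) δ) : (0 < g t ↔ 0 < t) ∧ (g t = 0 ↔ t = 0) := by
  have hmono : StrictMonoOn g (Ioo (-δ) δ) :=
    strictMonoOn_of_deriv_pos (convex_Ioo _ _)
      (fun s hs => (hg s hs).continuousAt.continuousWithinAt)
      (fun s hs => by rw [interior_Ioo] at hs; rw [(hg s hs).deriv]; exact hg' s hs)
  have h0 : (0 : ℝ) ∈ Ioo (-δ) δ := ⟨by linarith [ht.1, ht.2], by linarith [ht.1, ht.2]⟩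
  have hlt := hmono.lt_iff_lt h0 ht
  have heq := hmono.injOn.eq_iff ht h0
  rw [hg0] at hlt heq
  exact ⟨hlt, heq⟩

theorem sqrt_frobSq_le_sum_abs (M : Matrix (Fin 2) (Fin 2) ℝ) :
    Real.sqrt (frobSq M) ≤ ∑ i, ∑ j, |M i j| := by
  refine Real.sqrt_le_iff.2 ⟨by positivity, ?_⟩
  simp only [frobSq, Fin.sum_univ_two, ← sq_abs (M _ _)]
  nlinarith [abs_nonneg (M 0 0), abs_nonneg (M 0 1), abs_nonneg (M 1 0), abs_nonneg (M 1 1)]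

theorem isBigO_add_mul_of_differentiableAt {a b : ℝ → ℝ} (ha : DifferentiableAt ℝ a 0)
    (ha0 : a 0 = 0) (hb : ContinuousAt b 0) :
    (fun p : Fin 2 → ℝ => a (p 1) + p 0 * b (p 1)) =O[𝓝 0] fun p => ‖p‖ := by
  have hproj : Tendsto (fun p : Fin 2 → ℝ => p 1) (𝓝 0) (𝓝 0) :=
    (continuous_apply 1).tendsto' 0 0 rfl
  have hcoord : ∀ i : Fin 2, (fun p : Fin 2 → ℝ => p i) =O[𝓝 0] fun p => ‖p‖ := fun i =>
    isBigO_of_le _ fun p => by simpa using norm_le_pi_norm p i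
  have ha' : (fun p : Fin 2 → ℝ => a (p 1)) =O[𝓝 0] fun p => ‖p‖ := by
    have := ha.isBigO_sub.comp_tendsto hproj
    simp only [ha0, sub_zero] at this
    exact this.trans (hcoord 1)
  have hb' := (hcoord 0).mul ((hb.tendsto.comp hproj).isBigO_one ℝ)
  simp only [mul_one] at hb'
  exact ha'.add hb'

theorem hasFDerivAt_comp_sub_smul {F : Type*} [NormedAddCommGroup F] [NormedSpace ℝ F]
    {γ ν : ℝ → F} {γ' ν' : F} {p : Fin 2 → ℝ} (hγ : HasDerivAt γ γ' (p 1))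
    (hν : HasDerivAt ν ν' (p 1)) :
    HasFDerivAt (fun q : Fin 2 → ℝ => γ (q 1) - q 0 • ν (q 1))
      ((proj 1 : (Fin 2 → ℝ) →L[ℝ] ℝ).smulRight (γ' - p 0 • ν') -
        (proj 0 : (Fin 2 → ℝ) →L[ℝ] ℝ).smulRight (ν (p 1))) p := by
  have h0 := hasFDerivAt_apply (𝕜 := ℝ) (F' := fun _ : Fin 2 => ℝ) 0 p
  have h1 := hasFDerivAt_apply (𝕜 := ℝ) (F' := fun _ : Fin 2 => ℝ) 1 p
  refine ((hγ.hasFDerivAt.comp p h1).sub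
    (h0.smul (hν.hasFDerivAt.comp p h1))).congr_fderiv ?_
  ext v
  simp only [sub_apply, add_apply, coe_comp, Function.comp_apply, smul_apply, smulRight_apply,
    proj_apply, toSpanSingleton_apply]
  module

namespace BoundaryNormalCoordinates

variable {h : ℝ → ℝ}

def speed (h : ℝ → ℝ) (y : ℝ) : ℝ := Real.sqrt (1 + deriv h y ^ 2)

def unitNormal (h : ℝ → ℝ) (y : ℝ) : Fin 2 → ℝ := ![-1 / speed h y, deriv h y / speed h y]

def unitTangent (h : ℝ → ℝ) (y : ℝ) : Fin 2 → ℝ := ![-(deriv h y) / speed h y, -1 / speed h y]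

def curvature (h : ℝ → ℝ) (y : ℝ) : ℝ := deriv (deriv h) y / (1 + deriv h y ^ 2)

def normalCoords (h : ℝ → ℝ) (p : Fin 2 → ℝ) : Fin 2 → ℝ :=
  ![h (p 1) - p 0 * unitNormal h (p 1) 0, p 1 - p 0 * unitNormal h (p 1) 1]

lemma speed_pos (y : ℝ) : 0 < speed h y := Real.sqrt_pos.2 (by positivity)

lemma speed_sq (y : ℝ) : speed h y ^ 2 = 1 + deriv h y ^ 2 := Real.sq_sqrt (by positivity)

lemma speed_zero (h'0 : deriv h 0 = 0) : speed h 0 = 1 := by simp [speed, h'0]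

lemma hasDerivAt_speed {y : ℝ} (hd : DifferentiableAt ℝ (deriv h) y) :
    HasDerivAt (speed h) (deriv h y * deriv (deriv h) y / speed h y) y := by
  have hpos : 1 + deriv h y ^ 2 ≠ 0 := by positivity
  refine (((hd.hasDerivAt.pow 2).const_add 1).sqrt hpos).congr_deriv ?_
  simp only [speed, Pi.pow_apply]
  field_simp
  ring

lemma contDiff_speed (hd : ContDiff ℝ 1 (deriv h)) : ContDiff ℝ 1 (speed h) :=
  (contDiff_const.add (hd.pow 2)).sqrt fun y => by positivity

lemma speed_smul_unitTangent (y : ℝ) : speed h y • unitTangent h y = -![deriv h y, 1] := by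
  have := (speed_pos (h := h) y).ne'
  ext i
  fin_cases i <;> simp [unitTangent] <;> field_simp

lemma hasDerivAt_unitNormal {y : ℝ} (hd : DifferentiableAt ℝ (deriv h) y) :
    HasDerivAt (unitNormal h) (-curvature h y • unitTangent h y) y := by
  have hs := hasDerivAt_speed hd
  have hne := (speed_pos (h := h) y).ne'
  have hsq := speed_sq (h := h) y
  rw [hasDerivAt_pi]
  intro i
  fin_cases i
  · show HasDerivAt (fun x => -1 / speed h x) _ y
    refine ((hasDerivAt_const y (-1 : ℝ)).div hs hne).congr_deriv ?_
    simp [unitTangent, curvature, ← hsq]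
    field_simp
  · show HasDerivAt (fun x => deriv h x / speed h x) _ y
    refine (hd.hasDerivAt.div hs hne).congr_deriv ?_
    simp [unitTangent, curvature, ← hsq]
    field_simp
    linear_combination deriv (deriv h) y * hsq

lemma normalCoords_eq (p : Fin 2 → ℝ) :
    normalCoords h p = ![h (p 1), p 1] - p 0 • unitNormal h (p 1) := by
  ext i
  fin_cases i <;> rfl

lemma hasFDerivAt_normalCoords {p : Fin 2 → ℝ} (hh : DifferentiableAt ℝ h (p 1))
    (hd : DifferentiableAt ℝ (deriv h) (p 1)) :
    HasFDerivAt (normalCoords h)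
      ((proj 1 : (Fin 2 → ℝ) →L[ℝ] ℝ).smulRight
          ((p 0 * curvature h (p 1) - speed h (p 1)) • unitTangent h (p 1)) -
        (proj 0 : (Fin 2 → ℝ) →L[ℝ] ℝ).smulRight (unitNormal h (p 1))) p := by
  have hγ : HasDerivAt (fun y => ![h y, y]) ![deriv h (p 1), 1] (p 1) := by
    rw [hasDerivAt_pi]
    intro i
    fin_cases i
    exacts [hh.hasDerivAt, hasDerivAt_id _]
  have := hasFDerivAt_comp_sub_smul hγ (hasDerivAt_unitNormal hd)
  rw [show normalCoords h = _ from funext normalCoords_eq]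
  refine this.congr_fderiv ?_
  rw [← neg_neg ![deriv h (p 1), 1], ← speed_smul_unitTangent]
  congr 2
  module

lemma grad_normalCoords (hh : Differentiable ℝ h) (hd : Differentiable ℝ (deriv h))
    (p : Fin 2 → ℝ) :
    grad (normalCoords h) p =
      !![-(unitNormal h (p 1) 0),
          unitTangent h (p 1) 0 * (p 0 * curvature h (p 1) - speed h (p 1));
         -(unitNormal h (p 1) 1),
          unitTangent h (p 1) 1 * (p 0 * curvature h (p 1) - speed h (p 1))] := by
  ext i j
  rw [grad, (hasFDerivAt_normalCoords (hh (p 1)) (hd (p 1))).fderiv]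
  fin_cases i <;> fin_cases j <;> simp [mul_comm (unitTangent h (p 1) _)]

lemma hasFDerivAt_normalCoords_zero (hh : DifferentiableAt ℝ h 0)
    (hd : DifferentiableAt ℝ (deriv h) 0) (h'0 : deriv h 0 = 0) :
    HasFDerivAt (normalCoords h) (ContinuousLinearMap.id ℝ (Fin 2 → ℝ)) 0 := by
  refine (hasFDerivAt_normalCoords (p := 0) hh hd).congr_fderiv ?_
  ext v i
  fin_cases i <;> simp [unitNormal, unitTangent, speed_zero h'0, h'0]

lemma grad_normalCoords_zero (hh : DifferentiableAt ℝ h 0)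
    (hd : DifferentiableAt ℝ (deriv h) 0) (h'0 : deriv h 0 = 0) :
    grad (normalCoords h) 0 = 1 := by
  ext i j
  rw [grad, (hasFDerivAt_normalCoords_zero hh hd h'0).fderiv]
  fin_cases i <;> fin_cases j <;> simp

lemma contDiff_normalCoords (hreg : ContDiff ℝ 2 h) : ContDiff ℝ 1 (normalCoords h) := by
  have hd : ContDiff ℝ 1 (deriv h) := hreg.deriv'
  have hs := contDiff_speed hd
  have hγ : ContDiff ℝ 1 fun y => ![h y, y] := by
    rw [contDiff_pi]
    intro i
    fin_cases i
    exacts [hreg.of_le one_le_two, contDiff_id]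
  have hν : ContDiff ℝ 1 (unitNormal h) := by
    rw [contDiff_pi]
    intro i
    fin_cases i
    exacts [contDiff_const.div hs fun y => (speed_pos y).ne',
      hd.div hs fun y => (speed_pos y).ne']
  rw [show normalCoords h = _ from funext normalCoords_eq]
  exact (hγ.comp (contDiff_apply ℝ ℝ 1)).sub
    ((contDiff_apply ℝ ℝ 0).smul (hν.comp (contDiff_apply ℝ ℝ 1)))

lemma normalCoords_zero (h0 : h 0 = 0) : normalCoords h 0 = 0 := by
  ext i
  fin_cases i <;> simp [normalCoords, h0]

lemma normalCoords_mem_iff (hh : Differentiable ℝ h) {δ : ℝ}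
    (htrans : ∀ q ∈ Metric.ball (0 : Fin 2 → ℝ) δ,
      0 < -unitNormal h (q 1) 0 + deriv h (normalCoords h q 1) * unitNormal h (q 1) 1)
    {p : Fin 2 → ℝ} (hp : p ∈ Metric.ball 0 δ) :
    (h (normalCoords h p 1) < normalCoords h p 0 ↔ 0 < p 0) ∧
      (h (normalCoords h p 1) = normalCoords h p 0 ↔ p 0 = 0) := by
  have hδ : 0 < δ := Metric.pos_of_mem_ball hp
  obtain ⟨x, y, rfl⟩ : ∃ x y, p = ![x, y] := ⟨p 0, p 1, by ext i; fin_cases i <;> rfl⟩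
  rw [vec2_mem_ball_zero hδ] at hp
  set a := unitNormal h y 0
  set b := unitNormal h y 1
  have hslice : ∀ t ∈ Ioo (-δ) δ, HasDerivAt (fun t => h y - t * a - h (y - t * b))
      (-a + deriv h (y - t * b) * b) t := by
    intro t _
    exact (((hasDerivAt_mul_const a).const_sub (h y)).sub
      ((hh _).hasDerivAt.comp t ((hasDerivAt_mul_const b).const_sub y))).congr_deriv (by ring)
  have hpos : ∀ t ∈ Ioo (-δ) δ, 0 < -a + deriv h (y - t * b) * b := fun t ht =>
    by simpa [normalCoords] using htrans ![t, y] ((vec2_mem_ball_zero hδ).2 ⟨abs_lt.2 ht, hp.2⟩)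
  have := pos_iff_and_eq_zero_iff_of_deriv_pos hslice hpos (by simp) (abs_lt.1 hp.1)
  simpa [normalCoords, sub_pos, sub_eq_zero, eq_comm (a := h _)] using this

lemma eventually_transversal (hreg : ContDiff ℝ 2 h) (h'0 : deriv h 0 = 0) :
    ∀ᶠ q in 𝓝 (0 : Fin 2 → ℝ),
      0 < -unitNormal h (q 1) 0 + deriv h (normalCoords h q 1) * unitNormal h (q 1) 1 := by
  have hd : ContDiff ℝ 1 (deriv h) := hreg.deriv'
  have hν : Continuous (unitNormal h) := continuous_iff_continuousAt.2 fun y =>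
    (hasDerivAt_unitNormal (hd.differentiable one_ne_zero y)).continuousAt
  have hΦ := (contDiff_normalCoords hreg).continuous
  have hd' := hd.continuous
  refine ContinuousAt.eventually_lt (f := fun _ => (0 : ℝ)) continuousAt_const (by fun_prop) ?_
  simp [unitNormal, speed_zero h'0, h'0]

theorem exists_normalCoords_diffeoOn (hreg : ContDiff ℝ 2 h) (h0 : h 0 = 0)
    (h'0 : deriv h 0 = 0) :
    ∃ U V : Set (Fin 2 → ℝ), IsOpen U ∧ IsOpen V ∧ (0 : Fin 2 → ℝ) ∈ U ∧
      (0 : Fin 2 → ℝ) ∈ V ∧ BijOn (normalCoords h) U V ∧ ContDiffOn ℝ 1 (normalCoords h) U ∧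
      (∃ Ψ : (Fin 2 → ℝ) → (Fin 2 → ℝ), ContDiffOn ℝ 1 Ψ V ∧
        ∀ p ∈ U, Ψ (normalCoords h p) = p) ∧
      normalCoords h '' (U ∩ {p | 0 < p 0}) = {p | h (p 1) < p 0} ∩ V ∧
      normalCoords h '' (U ∩ {p | p 0 = 0}) = frontier {p | h (p 1) < p 0} ∩ V := by
  have hh : Differentiable ℝ h := hreg.differentiable (by norm_num)
  have hd : ContDiff ℝ 1 (deriv h) := hreg.deriv'
  have hΦ := contDiff_normalCoords hreg
  obtain ⟨t, ht, hdiffeo⟩ := hΦ.exists_mem_nhds_diffeoOn le_rfl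
    (f' := ContinuousLinearEquiv.refl ℝ _)
    (hasFDerivAt_normalCoords_zero (hh 0) (hd.differentiable one_ne_zero 0) h'0)
  obtain ⟨δ, hδ, hball⟩ := Metric.mem_nhds_iff.1 (inter_mem ht (eventually_transversal hreg h'0))
  obtain ⟨hVo, hinj, Ψ, hΨ, hleft⟩ :=
    hdiffeo _ (fun q hq => (hball hq).1) Metric.isOpen_ball
  have hsign := fun p (hp : p ∈ Metric.ball 0 δ) =>
    normalCoords_mem_iff hh (fun q hq => (hball hq).2) hp
  refine ⟨_, _, Metric.isOpen_ball, hVo, Metric.mem_ball_self hδ,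
    ⟨0, Metric.mem_ball_self hδ, normalCoords_zero h0⟩, hinj.bijOn_image, hΦ.contDiffOn,
    ⟨Ψ, hΨ, hleft⟩, image_inter_setOf_eq_inter_image fun p hp => (hsign p hp).1, ?_⟩
  rw [frontier_setOf_lt_apply hh.continuous]
  exact image_inter_setOf_eq_inter_image fun p hp => (hsign p hp).2

lemma isBigO_grad_normalCoords_sub_one (hreg : ContDiff ℝ 2 h) (h'0 : deriv h 0 = 0) (i j : Fin 2) :
    (fun p => (grad (normalCoords h) p - 1) i j) =O[𝓝 0] fun p => ‖p‖ := by
  have hh : Differentiable ℝ h := hreg.differentiable (by norm_num)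
  have hd : ContDiff ℝ 1 (deriv h) := hreg.deriv'
  have hν : DifferentiableAt ℝ (unitNormal h) 0 :=
    (hasDerivAt_unitNormal (hd.differentiable one_ne_zero 0)).differentiableAt
  have hκτ : Continuous fun y => curvature h y * unitTangent h y i := by
    have := hd.continuous_deriv le_rfl
    have := (contDiff_speed hd).continuous
    have := hd.continuous
    fin_cases i <;> simp only [curvature, unitTangent, Fin.zero_eta, Fin.mk_one,
      Matrix.cons_val_zero, Matrix.cons_val_one] <;>
      fun_prop (disch := intro; first | exact (speed_pos _).ne' | positivity)
  have hgrad := grad_normalCoords hh (hd.differentiable one_ne_zero)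
  fin_cases j
  · refine (isBigO_add_mul_of_differentiableAt (b := 0)
      ((differentiableAt_pi.1 hν i).neg.sub_const ((1 : Matrix (Fin 2) (Fin 2) ℝ) i 0)) ?_
      continuousAt_const).congr_left fun p => ?_
    · fin_cases i <;> simp [unitNormal, speed_zero h'0, h'0, Matrix.one_apply]
    · fin_cases i <;> simp [hgrad, Matrix.one_apply]
  · refine (isBigO_add_mul_of_differentiableAt
      (a := fun y => ![deriv h y, 1] i - (1 : Matrix (Fin 2) (Fin 2) ℝ) i 1) ?_ ?_
      hκτ.continuousAt).congr_left fun p => ?_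
    · fin_cases i <;> simp only [Fin.zero_eta, Fin.mk_one, Matrix.cons_val_zero,
        Matrix.cons_val_one]
      exacts [(hd.differentiable one_ne_zero 0).sub_const _, differentiableAt_const _]
    · fin_cases i <;> simp [h'0, Matrix.one_apply]
    · have := congrFun (speed_smul_unitTangent (h := h) (p 1)) i
      fin_cases i <;> simp [hgrad, Matrix.one_apply] at this ⊢ <;> linear_combination this

theorem exists_sqrt_frobSq_grad_normalCoords_sub_one_le (hreg : ContDiff ℝ 2 h)
    (h'0 : deriv h 0 = 0) :
    ∃ C > 0, ∃ r₀ > 0, ∀ r ∈ Ioo (0 : ℝ) r₀, ∀ p : Fin 2 → ℝ, |p 0| < r → |p 1| < r →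
      Real.sqrt (frobSq (grad (normalCoords h) p - 1)) ≤ C * r := by
  have hO : (fun p => Real.sqrt (frobSq (grad (normalCoords h) p - 1))) =O[𝓝 0]
      fun p => ‖p‖ := by
    have hsum : (fun p => ∑ i, ∑ j, |(grad (normalCoords h) p - 1) i j|) =O[𝓝 0]
        fun p => ‖p‖ := IsBigO.fun_sum fun i _ => IsBigO.fun_sum fun j _ =>
      (isBigO_grad_normalCoords_sub_one hreg h'0 i j).abs_left
    refine (isBigO_of_le _ fun p => ?_).trans hsum
    rw [Real.norm_of_nonneg (Real.sqrt_nonneg _), Real.norm_of_nonneg (by positivity)]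
    exact sqrt_frobSq_le_sum_abs _
  obtain ⟨C, hC, hCO⟩ := hO.exists_pos
  obtain ⟨r₀, hr₀, hbound⟩ := Metric.eventually_nhds_iff_ball.1 hCO.bound
  refine ⟨C, hC, r₀, hr₀, fun r hr p hp0 hp1 => ?_⟩
  have hp : ‖p‖ < r := (pi_norm_lt_iff hr.1).2 (Fin.forall_fin_two.2 ⟨hp0, hp1⟩)
  have := hbound p (mem_ball_zero_iff.2 (hp.trans hr.2))
  rw [Real.norm_of_nonneg (Real.sqrt_nonneg _), norm_norm] at this
  exact this.trans (mul_le_mul_of_nonneg_left hp.le hC.le)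

end BoundaryNormalCoordinates

theorem stmt_12_general (h : ℝ → ℝ) (hreg : ContDiff ℝ 2 h)
    (h0 : h 0 = 0) (h'0 : deriv h 0 = 0) :
    let s : ℝ → ℝ := fun y => Real.sqrt (1 + deriv h y ^ 2)
    let ν : ℝ → Fin 2 → ℝ := fun y => ![-1 / s y, deriv h y / s y]
    let τ : ℝ → Fin 2 → ℝ := fun y => ![-(deriv h y) / s y, -1 / s y]
    let κ : ℝ → ℝ := fun y => deriv (deriv h) y / (1 + deriv h y ^ 2)
    let Φ : (Fin 2 → ℝ) → (Fin 2 → ℝ) :=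
      fun p => ![h (p 1) - p 0 * ν (p 1) 0, p 1 - p 0 * ν (p 1) 1]
    let D : Set (Fin 2 → ℝ) := {p | h (p 1) < p 0}
    Differentiable ℝ Φ ∧
    (∀ p : Fin 2 → ℝ, grad Φ p =
      !![-(ν (p 1) 0), τ (p 1) 0 * (p 0 * κ (p 1) - s (p 1));
         -(ν (p 1) 1), τ (p 1) 1 * (p 0 * κ (p 1) - s (p 1))]) ∧
    grad Φ 0 = 1 ∧
    (∃ U V : Set (Fin 2 → ℝ), IsOpen U ∧ IsOpen V ∧
      (0 : Fin 2 → ℝ) ∈ U ∧ (0 : Fin 2 → ℝ) ∈ V ∧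
      Set.BijOn Φ U V ∧ ContDiffOn ℝ 1 Φ U ∧
      (∃ Ψ : (Fin 2 → ℝ) → (Fin 2 → ℝ), ContDiffOn ℝ 1 Ψ V ∧
        ∀ p ∈ U, Ψ (Φ p) = p) ∧
      Φ '' (U ∩ {p | 0 < p 0}) = D ∩ V ∧
      Φ '' (U ∩ {p | p 0 = 0}) = frontier D ∩ V) ∧
    (∃ C > 0, ∃ r₀ > 0, ∀ r ∈ Set.Ioo (0 : ℝ) r₀, ∀ p : Fin 2 → ℝ,
      |p 0| < r → |p 1| < r →
        Real.sqrt (frobSq (grad Φ p - 1)) ≤ C * r) := by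
  open BoundaryNormalCoordinates in
  have hh : Differentiable ℝ h := hreg.differentiable (by norm_num)
  have hd : Differentiable ℝ (deriv h) := hreg.deriv'.differentiable one_ne_zero
  exact ⟨(contDiff_normalCoords hreg).differentiable one_ne_zero, grad_normalCoords hh hd,
    grad_normalCoords_zero (hh 0) (hd 0) h'0, exists_normalCoords_diffeoOn hreg h0 h'0,
    exists_sqrt_frobSq_grad_normalCoords_sub_one_le hreg h'0⟩

/-- **Lemma (inverse boundary normal coordinates).** For a `C^{2,1}` graph
boundary `{x = h(y)}` with `h(0) = h'(0) = 0`, the map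
`Φ(x,y) = (h(y), y) - x·ν(y)` has the stated Jacobian, equals the identity at the
origin, is a local `C¹` diffeomorphism flattening `∂D` to `{x = 0}` and mapping
`{x > 0}` to `D`, and satisfies `|∇Φ - Id| ≤ C·r` on `Q_r`. -/
theorem stmt_12 (h : ℝ → ℝ) (hreg : ContDiff ℝ 2 h)
    (hlip : LocallyLipschitz (deriv (deriv h)))
    (h0 : h 0 = 0) (h'0 : deriv h 0 = 0) :
    let s : ℝ → ℝ := fun y => Real.sqrt (1 + deriv h y ^ 2)
    let ν : ℝ → Fin 2 → ℝ := fun y => ![-1 / s y, deriv h y / s y]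
    let τ : ℝ → Fin 2 → ℝ := fun y => ![-(deriv h y) / s y, -1 / s y]
    let κ : ℝ → ℝ := fun y => deriv (deriv h) y / (1 + deriv h y ^ 2)
    let Φ : (Fin 2 → ℝ) → (Fin 2 → ℝ) :=
      fun p => ![h (p 1) - p 0 * ν (p 1) 0, p 1 - p 0 * ν (p 1) 1]
    let D : Set (Fin 2 → ℝ) := {p | h (p 1) < p 0}
    Differentiable ℝ Φ ∧
    (∀ p : Fin 2 → ℝ, grad Φ p =
      !![-(ν (p 1) 0), τ (p 1) 0 * (p 0 * κ (p 1) - s (p 1));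
         -(ν (p 1) 1), τ (p 1) 1 * (p 0 * κ (p 1) - s (p 1))]) ∧
    grad Φ 0 = 1 ∧
    (∃ U V : Set (Fin 2 → ℝ), IsOpen U ∧ IsOpen V ∧
      (0 : Fin 2 → ℝ) ∈ U ∧ (0 : Fin 2 → ℝ) ∈ V ∧
      Set.BijOn Φ U V ∧ ContDiffOn ℝ 1 Φ U ∧
      (∃ Ψ : (Fin 2 → ℝ) → (Fin 2 → ℝ), ContDiffOn ℝ 1 Ψ V ∧
        ∀ p ∈ U, Ψ (Φ p) = p) ∧
      Φ '' (U ∩ {p | 0 < p 0}) = D ∩ V ∧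
      Φ '' (U ∩ {p | p 0 = 0}) = frontier D ∩ V) ∧
    (∃ C > 0, ∃ r₀ > 0, ∀ r ∈ Set.Ioo (0 : ℝ) r₀, ∀ p : Fin 2 → ℝ,
      |p 0| < r → |p 1| < r →
        Real.sqrt (frobSq (grad Φ p - 1)) ≤ C * r) :=
  stmt_12_general h hreg h0 h'0
end
end
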